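/- Fix h(z), b(z) ∈ ℂ((z)) with h′(z) ≠ 0 and c ∈ ℂ. Define, for each i ∈ ℤ, the first-order differential operator ρ(L_i) = −(h(z)^{i+1}/h′(z))∂ + (b(z) + i·c)·h(z)^i on ℂ((z)). Then [ρ(L_i), ρ(L_j)] = (i−j)ρ(L_{i+j}) for all i, j ∈ ℤ; i.e. ρ is a representation of the Witt algebra. -/

import Mathlib

set_option synthInstance.maxHeartbeats 1000000
set_option maxHeartbeats 1000000

noncomputable section

/-- The derivative `∂ = d/dz` on `ℂ((z))`, as a `ℂ`-linear endomorphism. -/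
def Dz : Module.End ℂ (LaurentSeries ℂ) := LaurentSeries.derivative ℂ

/-- Multiplication by a Laurent series `g`, as a `ℂ`-linear endomorphism of `ℂ((z))`. -/
def mz (g : LaurentSeries ℂ) : Module.End ℂ (LaurentSeries ℂ) where
  toFun f := g * f
  map_add' := mul_add g
  map_smul' c f := by
    show g * (c • f) = c • (g * f)
    rw [← HahnSeries.single_zero_mul_eq_smul, ← HahnSeries.single_zero_mul_eq_smul, mul_left_comm]

/-- `P` is a differential operator on `ℂ((z))` of order `≤ k`: `P = Σ_{j=0}^{k} ξ_j ∂^j`. -/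
def DiffOrderLE (P : Module.End ℂ (LaurentSeries ℂ)) (k : ℕ) : Prop :=
  ∃ ξ : ℕ → LaurentSeries ℂ, P = ∑ j ∈ Finset.range (k + 1), mz (ξ j) * Dz ^ j

/-- `P` is a differential operator on `ℂ((z))` of order `< k` (for `k = 0` this means `P = 0`). -/
def DiffOrderLT (P : Module.End ℂ (LaurentSeries ℂ)) (k : ℕ) : Prop :=
  ∃ ξ : ℕ → LaurentSeries ℂ, P = ∑ j ∈ Finset.range k, mz (ξ j) * Dz ^ j

/-- `P` is a differential operator on `ℂ((z))` of order exactly `k`. -/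
def HasOrder (P : Module.End ℂ (LaurentSeries ℂ)) (k : ℕ) : Prop :=
  DiffOrderLE P k ∧ ¬ DiffOrderLT P k

/-!
With `w = 1 / h′`, the operator `w ∂` is a derivation sending `h` to `1`, and
`ρ(L i) = −h^{i+1} (w ∂) + (b + i c) h^i` is the standard realisation of the Witt algebra in the
coordinate `h`. Concretely, for first-order operators
`[u ∂ + v, u' ∂ + v'] = (u u'′ − u' u′) ∂ + (u v'′ − u' v′)`, so the claim reduces to two
identities in the differential field `ℂ((z))`, which follow from the Leibniz rule for `∂` on
integer powers and quotients.
-/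

namespace LaurentSeries

variable {R : Type*} [CommRing R]

open HahnSeries

theorem coeff_single_one_mul_derivative (f : LaurentSeries R) (n : ℤ) :
    (single 1 1 * derivative R f).coeff n = n • f.coeff n := by
  obtain ⟨m, rfl⟩ : ∃ m, n = m + 1 := ⟨n - 1, by ring⟩
  rw [coeff_single_mul_add, one_mul, derivative_apply, hasseDeriv_coeff]
  simp

theorem support_single_one_mul_derivative_subset (f : LaurentSeries R) :
    (single 1 1 * derivative R f).support ⊆ f.support := fun n hn h0 =>
  hn (by rw [coeff_single_one_mul_derivative, h0, smul_zero])

/-- `z ∂` multiplies the `n`-th coefficient by `n`, so it satisfies the Leibniz rule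
coefficientwise on each antidiagonal `i + j = n`; then cancel the unit `z`. -/
theorem derivative_mul (f g : LaurentSeries R) :
    derivative R (f * g) = f * derivative R g + derivative R f * g := by
  have hz : single (-1) (1 : R) * single 1 1 = 1 := by simp [single_mul_single]
  suffices h : single 1 1 * derivative R (f * g) =
      single 1 1 * (f * derivative R g + derivative R f * g) by
    rw [← one_mul (derivative R (f * g)), ← hz, mul_assoc, h, ← mul_assoc, hz, one_mul]
  ext n
  rw [mul_add, mul_left_comm (single 1 1) f, ← mul_assoc (single 1 1), coeff_add,
    coeff_single_one_mul_derivative,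
    coeff_mul_right' g.isPWO_support g.support_single_one_mul_derivative_subset,
    coeff_mul_left' f.isPWO_support f.support_single_one_mul_derivative_subset, coeff_mul,
    Finset.smul_sum, ← Finset.sum_add_distrib]
  refine Finset.sum_congr rfl fun ij hij => ?_
  rw [Finset.mem_antidiagonal] at hij
  rw [coeff_single_one_mul_derivative, coeff_single_one_mul_derivative, ← hij.2.2,
    add_smul, smul_mul_assoc, mul_smul_comm, add_comm]

theorem derivative_C (r : R) : derivative R (C r) = 0 := by
  ext n
  simp

end LaurentSeries

/-- On `ℂ((z))` the `ℂ`-module structure of `HahnSeries` and the one induced by the algebra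
`ℂ → ℂ((z))` are not defeq, so `Dz` is turned into a derivation over `ℤ`. -/
def AddMonoidHom.toIntDerivation {A : Type*} [CommRing A] (D : A →+ A)
    (h : ∀ x y, D (x * y) = x * D y + D x * y) : Derivation ℤ A A :=
  Derivation.mk' D.toIntLinearMap fun x y => by
    rw [smul_eq_mul, smul_eq_mul, mul_comm y]
    exact h x y

section DifferentialField

variable {K : Type*} [Field K] {δ : Derivation ℤ K K} {t : K}

theorem witt_vectorField_bracket (ht : δ t ≠ 0) (i j : ℤ) :
    -(t ^ (i + 1) / δ t) * δ (-(t ^ (j + 1) / δ t)) -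
        -(t ^ (j + 1) / δ t) * δ (-(t ^ (i + 1) / δ t)) =
      ((i : K) - j) * -(t ^ (i + j + 1) / δ t) := by
  have ht0 : t ≠ 0 := ne_of_apply_ne δ (by rwa [map_zero])
  simp only [map_neg, Derivation.leibniz_div, Derivation.leibniz, Derivation.leibniz_zpow,
    smul_eq_mul, zsmul_eq_mul, zpow_add₀ ht0, zpow_sub₀ ht0, zpow_one]
  field_simp
  ring

theorem witt_potential_bracket (ht : δ t ≠ 0) {a : K} (ha : δ a = 0) (b : K) (i j : ℤ) :
    -(t ^ (i + 1) / δ t) * δ ((b + j * a) * t ^ j) -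
        -(t ^ (j + 1) / δ t) * δ ((b + i * a) * t ^ i) =
      ((i : K) - j) * ((b + ↑(i + j) * a) * t ^ (i + j)) := by
  have ht0 : t ≠ 0 := ne_of_apply_ne δ (by rwa [map_zero])
  simp only [Derivation.leibniz, Derivation.leibniz_zpow, map_add, ha, smul_eq_mul, zsmul_eq_mul,
    Int.cast_add, zpow_add₀ ht0, zpow_sub₀ ht0, zpow_one, Derivation.map_intCast]
  field_simp
  ring

end DifferentialField

theorem Dz_mul (f g : LaurentSeries ℂ) : Dz (f * g) = f * Dz g + Dz f * g :=
  LaurentSeries.derivative_mul f g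

theorem Dz_algebraMap (c : ℂ) : Dz (algebraMap ℂ (LaurentSeries ℂ) c) = 0 := by
  rw [HahnSeries.algebraMap_apply', PowerSeries.algebraMap_apply, Algebra.algebraMap_self,
    RingHom.id_apply, HahnSeries.ofPowerSeries_C]
  exact LaurentSeries.derivative_C c

theorem mz_apply (g f : LaurentSeries ℂ) : mz g f = g * f := rfl

theorem lie_mz_mul_Dz_add_mz (u v u' v' : LaurentSeries ℂ) :
    ⁅mz u * Dz + mz v, mz u' * Dz + mz v'⁆ =
      mz (u * Dz u' - u' * Dz u) * Dz + mz (u * Dz v' - u' * Dz v) := by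
  rw [LieRing.of_associative_ring_bracket]
  ext1 x
  simp only [LinearMap.sub_apply, LinearMap.add_apply, Module.End.mul_apply, mz_apply, map_add,
    Dz_mul]
  ring

theorem smul_mz_mul_Dz_add_mz (r : ℂ) (u v : LaurentSeries ℂ) :
    r • (mz u * Dz + mz v) = mz (HahnSeries.C r * u) * Dz + mz (HahnSeries.C r * v) := by
  ext1 x
  show r • (u * Dz x + v * x) = HahnSeries.C r * u * Dz x + HahnSeries.C r * v * x
  rw [← HahnSeries.C_mul_eq_smul]
  ring

/-- Fix `h, b ∈ ℂ((z))` with `h′ ≠ 0` and `c ∈ ℂ`.  The first-order operators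
`ρ(L i) = −(h^{i+1}/h′) ∂ + (b + i·c) h^i` satisfy `[ρ(L i), ρ(L j)] = (i−j) ρ(L (i+j))`
for all `i, j ∈ ℤ`, i.e. `ρ` is a representation of the Witt algebra. -/
theorem witt_representation_first_order
    (h b : LaurentSeries ℂ) (c : ℂ) (hder : Dz h ≠ 0)
    (ρ : ℤ → Module.End ℂ (LaurentSeries ℂ))
    (hρ : ∀ i : ℤ, ρ i = mz (-(h ^ (i + 1) / Dz h)) * Dz +
      mz ((b + algebraMap ℂ (LaurentSeries ℂ) ((i : ℂ) * c)) * h ^ i)) :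
    ∀ i j : ℤ, ⁅ρ i, ρ j⁆ = (((i : ℂ) - (j : ℂ))) • ρ (i + j) := by
  intro i j
  simp only [hρ, map_mul, map_intCast]
  rw [lie_mz_mul_Dz_add_mz, smul_mz_mul_Dz_add_mz, map_sub, map_intCast, map_intCast]
  let δ := Dz.toAddMonoidHom.toIntDerivation Dz_mul
  exact congrArg₂ (fun u v ↦ mz u * Dz + mz v) (witt_vectorField_bracket (δ := δ) hder i j)
    (witt_potential_bracket (δ := δ) hder (Dz_algebraMap c) b i j)
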